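/- Let ℓ ≥ 4k for a positive integer k, let s ≤ kℓ, let r ≥ 3, and suppose |X| ≥ (r−3)(k³+9) + 4k². Then (ℓ/(2k))·|X| − (r−3)·s ≥ |X| + s. -/

import Mathlib

/-!
Write `t = r - 3`. Since `ℓ ≥ 4k`, the term `(ℓ/(2k))·X` exceeds `X` by at least `(ℓ/(4k))·X`,
so it suffices that `(1 + t)·s ≤ (ℓ/(4k))·X`. As `s ≤ kℓ`, this follows from `4k²(1 + t) ≤ X`,
which is the hypothesis on `X` once `4k² ≤ k³ + 9`; the latter holds for every natural `k`
(though not for every real `k ≥ 0`), since `k³ - 4k² + 9 = (k - 3)(k² - k - 3)`.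
-/

theorem Nat.four_mul_sq_le_cube_add_nine (k : ℕ) : 4 * k ^ 2 ≤ k ^ 3 + 9 := by
  rcases le_or_gt k 3 with hk | hk
  · interval_cases k <;> norm_num
  · nlinarith

theorem add_le_div_mul_sub_mul {k t ℓ s X : ℝ} (hk : 0 < k) (ht : 0 ≤ t) (hℓ : 4 * k ≤ ℓ)
    (hs : s ≤ k * ℓ) (hX : 4 * k ^ 2 * (1 + t) ≤ X) :
    X + s ≤ ℓ / (2 * k) * X - t * s := by
  have hℓ0 : 0 ≤ ℓ := by linarith
  have hX0 : 0 ≤ X := le_trans (by positivity) hX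
  have hquarter : 1 ≤ ℓ / (4 * k) := by rwa [one_le_div (by positivity)]
  have hsplit : ℓ / (2 * k) * X = X + ℓ / (4 * k) * X + (ℓ / (4 * k) - 1) * X := by
    field_simp
    ring
  have hs_le : (1 + t) * s ≤ ℓ / (4 * k) * X :=
    calc (1 + t) * s ≤ (1 + t) * (k * ℓ) := by gcongr
      _ = ℓ / (4 * k) * (4 * k ^ 2 * (1 + t)) := by field_simp
      _ ≤ ℓ / (4 * k) * X := by gcongr
  linarith [mul_nonneg (sub_nonneg.2 hquarter) hX0]

theorem multiKillerSupported_count_general (k r : ℕ) (hk : 1 ≤ k) (hr : 3 ≤ r)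
    (ℓ s X : ℝ) (hℓ : 4 * k ≤ ℓ) (hs : s ≤ k * ℓ)
    (hX : ((r : ℝ) - 3) * (k ^ 3 + 9) + 4 * k ^ 2 ≤ X) :
    X + s ≤ (ℓ / (2 * k)) * X - ((r : ℝ) - 3) * s := by
  have ht : (0 : ℝ) ≤ r - 3 := by
    rw [sub_nonneg]
    exact_mod_cast hr
  have hcube : 4 * (k : ℝ) ^ 2 ≤ k ^ 3 + 9 := by
    exact_mod_cast Nat.four_mul_sq_le_cube_add_nine k
  refine add_le_div_mul_sub_mul (by positivity) ht hℓ hs ?_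
  linarith [mul_le_mul_of_nonneg_left hcube ht]

/-- The edge-counting inequality in the correctness proof of the Multi-Killer
Supported rule: for integers `k ≥ 1` and `r ≥ 3` and reals `ℓ ≥ 4k`, `0 ≤ s ≤ kℓ`,
and `X ≥ (r−3)(k³+9) + 4k²` (the size of the set `X`),
we have `(ℓ/(2k))·X − (r−3)·s ≥ X + s`. -/
theorem multiKillerSupported_count (k r : ℕ) (hk : 1 ≤ k) (hr : 3 ≤ r)
    (ℓ s X : ℝ) (hℓ : 4 * k ≤ ℓ) (hs0 : 0 ≤ s) (hs : s ≤ k * ℓ)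
    (hX : ((r : ℝ) - 3) * (k ^ 3 + 9) + 4 * k ^ 2 ≤ X) :
    X + s ≤ (ℓ / (2 * k)) * X - ((r : ℝ) - 3) * s :=
  multiKillerSupported_count_general k r hk hr ℓ s X hℓ hs hX
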